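/- Let Φ : G × Q → Q be a smooth left action of a Lie group on a smooth manifold, g_d : ℝ → G a smooth curve with Φ(g_d(t), 0_Q) = q_d(t), q : ℝ → Q a smooth curve, and e(t) = Φ(g_d(t)⁻¹, q(t)). Then for each t, the derivative ė(t) equals the zero tangent vector at 0_Q if and only if q̇(t) = q̇_d(t) in TQ. -/

import Mathlib

open Manifold Bundle

/-!
Write `F(s, x) = Φ(g_d(s), x)`. Then `q(s) = F(s, e(s))` and `q_d(s) = F(s, 0_Q)`, while
`e(s) = F⁻(s, q(s))` and `0_Q = F⁻(s, q_d(s))` for `F⁻(s, x) = Φ(g_d(s)⁻¹, x)`. By the chain rule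
the velocity of `s ↦ F(s, a(s))` at `t` is `dF_(t, a(t)) (1, ȧ(t))`, so it depends only on the
velocity `ȧ(t) ∈ TQ` of `a`. Comparing `e` with the constant curve at `0_Q` gives one direction,
comparing `q` with `q_d` the other.
-/

section

variable {𝕜 : Type*} [NontriviallyNormedField 𝕜]
  {E : Type*} [NormedAddCommGroup E] [NormedSpace 𝕜 E]
  {H : Type*} [TopologicalSpace H] {I : ModelWithCorners 𝕜 E H}
  {M : Type*} [TopologicalSpace M] [ChartedSpace H M]
  {E' : Type*} [NormedAddCommGroup E'] [NormedSpace 𝕜 E']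
  {H' : Type*} [TopologicalSpace H'] {I' : ModelWithCorners 𝕜 E' H'}
  {N : Type*} [TopologicalSpace N] [ChartedSpace H' N]
  {E'' : Type*} [NormedAddCommGroup E''] [NormedSpace 𝕜 E'']
  {H'' : Type*} [TopologicalSpace H''] {I'' : ModelWithCorners 𝕜 E'' H''}
  {P : Type*} [TopologicalSpace P] [ChartedSpace H'' P]

theorem mfderiv_comp_prodMk_apply {F : M × N → P} {a : M → N} {t : M}
    (hF : MDifferentiableAt (I.prod I') I'' F (t, a t)) (ha : MDifferentiableAt I I' a t)
    (v : TangentSpace I t) :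
    mfderiv I I'' (fun s => F (s, a s)) t v
      = mfderiv (I.prod I') I'' F (t, a t) (v, mfderiv I I' a t v) := by
  have h := mfderiv_comp_apply (f := fun s => (id s, a s)) t hF (mdifferentiableAt_id.prodMk ha) v
  rwa [mfderiv_prodMk mdifferentiableAt_id ha, mfderiv_id] at h

theorem tangentBundle_mk_mfderiv_congr_of_eq_comp_prodMk {F : M × N → P} {a b : M → N}
    {c d : M → P} (hc : ∀ s, c s = F (s, a s)) (hd : ∀ s, d s = F (s, b s)) {t : M}
    (hFa : MDifferentiableAt (I.prod I') I'' F (t, a t))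
    (hFb : MDifferentiableAt (I.prod I') I'' F (t, b t))
    (ha : MDifferentiableAt I I' a t) (hb : MDifferentiableAt I I' b t) (v : TangentSpace I t)
    (hab : (⟨a t, mfderiv I I' a t v⟩ : TangentBundle I' N) = ⟨b t, mfderiv I I' b t v⟩) :
    (⟨c t, mfderiv I I'' c t v⟩ : TangentBundle I'' P) = ⟨d t, mfderiv I I'' d t v⟩ := by
  obtain rfl : c = fun s => F (s, a s) := funext hc
  obtain rfl : d = fun s => F (s, b s) := funext hd
  rw [mfderiv_comp_prodMk_apply hFa ha, mfderiv_comp_prodMk_apply hFb hb]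
  exact congrArg (fun p : TangentBundle I' N =>
    (⟨F (t, p.proj), mfderiv (I.prod I') I'' F (t, p.proj) (v, p.2)⟩ : TangentBundle I'' P)) hab

end

theorem error_velocity_vanishes_iff_general
    {E : Type*} [NormedAddCommGroup E] [NormedSpace ℝ E]
    {H : Type*} [TopologicalSpace H] {I : ModelWithCorners ℝ E H}
    {Q : Type*} [TopologicalSpace Q] [ChartedSpace H Q]
    {E' : Type*} [NormedAddCommGroup E'] [NormedSpace ℝ E']
    {H' : Type*} [TopologicalSpace H'] {J : ModelWithCorners ℝ E' H'}
    {G : Type*} [TopologicalSpace G] [ChartedSpace H' G] [Group G] [LieGroup J (⊤ : ℕ∞) G]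
    (Φ : G → Q → Q)
    (hΦ : ContMDiff (J.prod I) I (⊤ : ℕ∞) (fun p : G × Q => Φ p.1 p.2))
    (hact_one : ∀ x : Q, Φ 1 x = x)
    (hact_mul : ∀ (g h : G) (x : Q), Φ g (Φ h x) = Φ (g * h) x)
    (origin : Q) (q q_d : ℝ → Q) (g_d : ℝ → G)
    (hq : ContMDiff 𝓘(ℝ, ℝ) I (⊤ : ℕ∞) q) (hgd : ContMDiff 𝓘(ℝ, ℝ) J (⊤ : ℕ∞) g_d)
    (hlift : ∀ t, Φ (g_d t) origin = q_d t)
    (e : ℝ → Q) (he : ∀ t, e t = Φ (g_d t)⁻¹ (q t)) (t : ℝ) :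
    (TotalSpace.mk (e t) (mfderiv 𝓘(ℝ, ℝ) I e t ((1:ℝ) : TangentSpace 𝓘(ℝ, ℝ) t))
        : TangentBundle I Q)
      = TotalSpace.mk origin (0 : TangentSpace I origin) ↔
    (TotalSpace.mk (q t) (mfderiv 𝓘(ℝ, ℝ) I q t ((1:ℝ) : TangentSpace 𝓘(ℝ, ℝ) t))
        : TangentBundle I Q)
      = TotalSpace.mk (q_d t) (mfderiv 𝓘(ℝ, ℝ) I q_d t ((1:ℝ) : TangentSpace 𝓘(ℝ, ℝ) t)) := by
  have inv_act : ∀ (g : G) (x : Q), Φ g⁻¹ (Φ g x) = x := fun g x => by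
    rw [hact_mul, inv_mul_cancel, hact_one]
  have act_inv : ∀ (g : G) (x : Q), Φ g (Φ g⁻¹ x) = x := fun g x => by
    rw [hact_mul, mul_inv_cancel, hact_one]
  have hF : ContMDiff (𝓘(ℝ, ℝ).prod I) I (⊤ : ℕ∞) (fun p : ℝ × Q => Φ (g_d p.1) p.2) :=
    hΦ.comp ((hgd.comp contMDiff_fst).prodMk contMDiff_snd)
  have hF_inv : ContMDiff (𝓘(ℝ, ℝ).prod I) I (⊤ : ℕ∞) (fun p : ℝ × Q => Φ (g_d p.1)⁻¹ p.2) :=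
    hΦ.comp ((hgd.comp contMDiff_fst).inv.prodMk contMDiff_snd)
  have he_diff : MDifferentiableAt 𝓘(ℝ, ℝ) I e t := by
    rw [funext he]
    exact (hF_inv.comp (contMDiff_id.prodMk hq)).mdifferentiableAt (by simp)
  have hqd_diff : MDifferentiableAt 𝓘(ℝ, ℝ) I q_d t := by
    rw [← funext hlift]
    exact (hF.comp (contMDiff_id.prodMk contMDiff_const)).mdifferentiableAt (by simp)
  have hzero : (0 : TangentSpace I origin) = mfderiv 𝓘(ℝ, ℝ) I (fun _ : ℝ => origin) t 1 := by
    rw [mfderiv_const]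
    rfl
  rw [hzero]
  constructor
  · exact tangentBundle_mk_mfderiv_congr_of_eq_comp_prodMk (F := fun p => Φ (g_d p.1) p.2)
      (b := fun _ => origin)
      (fun s => by rw [he, act_inv]) (fun s => (hlift s).symm)
      ((hF _).mdifferentiableAt (by simp)) ((hF _).mdifferentiableAt (by simp))
      he_diff mdifferentiableAt_const 1
  · exact tangentBundle_mk_mfderiv_congr_of_eq_comp_prodMk (F := fun p => Φ (g_d p.1)⁻¹ p.2)
      (b := q_d) he (fun s => by rw [← hlift, inv_act])
      ((hF_inv _).mdifferentiableAt (by simp)) ((hF_inv _).mdifferentiableAt (by simp))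
      ((hq t).mdifferentiableAt (by simp)) hqd_diff 1

/-- For a smooth left action `Φ` of a Lie group `G` on a manifold `Q`, a reference
trajectory `q_d` with `0_Q`-lift `g_d`, and an actual trajectory `q`, the velocity of the
error curve `e(t) = Φ(g_d(t)⁻¹, q(t))` equals the zero tangent vector at `0_Q` if and only
if `q̇(t) = q̇_d(t)` in `TQ` (including equality of basepoints). -/
theorem error_velocity_vanishes_iff
    {E : Type*} [NormedAddCommGroup E] [NormedSpace ℝ E]
    {H : Type*} [TopologicalSpace H] {I : ModelWithCorners ℝ E H}
    {Q : Type*} [TopologicalSpace Q] [ChartedSpace H Q] [IsManifold I (⊤ : ℕ∞) Q]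
    {E' : Type*} [NormedAddCommGroup E'] [NormedSpace ℝ E']
    {H' : Type*} [TopologicalSpace H'] {J : ModelWithCorners ℝ E' H'}
    {G : Type*} [TopologicalSpace G] [ChartedSpace H' G] [Group G] [LieGroup J (⊤ : ℕ∞) G]
    (Φ : G → Q → Q)
    (hΦ : ContMDiff (J.prod I) I (⊤ : ℕ∞) (fun p : G × Q => Φ p.1 p.2))
    (hact_one : ∀ x : Q, Φ 1 x = x)
    (hact_mul : ∀ (g h : G) (x : Q), Φ g (Φ h x) = Φ (g * h) x)
    (origin : Q) (q q_d : ℝ → Q) (g_d : ℝ → G)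
    (hq : ContMDiff 𝓘(ℝ, ℝ) I (⊤ : ℕ∞) q) (hgd : ContMDiff 𝓘(ℝ, ℝ) J (⊤ : ℕ∞) g_d)
    (hlift : ∀ t, Φ (g_d t) origin = q_d t)
    (e : ℝ → Q) (he : ∀ t, e t = Φ (g_d t)⁻¹ (q t)) (t : ℝ) :
    (TotalSpace.mk (e t) (mfderiv 𝓘(ℝ, ℝ) I e t ((1:ℝ) : TangentSpace 𝓘(ℝ, ℝ) t))
        : TangentBundle I Q)
      = TotalSpace.mk origin (0 : TangentSpace I origin) ↔
    (TotalSpace.mk (q t) (mfderiv 𝓘(ℝ, ℝ) I q t ((1:ℝ) : TangentSpace 𝓘(ℝ, ℝ) t))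
        : TangentBundle I Q)
      = TotalSpace.mk (q_d t) (mfderiv 𝓘(ℝ, ℝ) I q_d t ((1:ℝ) : TangentSpace 𝓘(ℝ, ℝ) t)) :=
  error_velocity_vanishes_iff_general Φ hΦ hact_one hact_mul origin q q_d g_d hq hgd hlift e he t
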